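/- Let p be an odd prime, L = F_{p^m}, σ = p^s with 0 < s < m, and d = gcd(s,m). Each of the following products, whenever it additionally satisfies the polynomial condition that x^{σ+1} + (1 − 1/N)x + (1/n − 1)/N has no root x ∈ L (for its parameters n, N), is a presemifield isotopic to a commutative presemifield: (1) B(p,m,s, n^{−(σ−1)/2}, n, n^{(σ−1)/2}) with n ∈ L a non-square and m/d or s/d even; (2) B(p,m,s, −n^{−(σ−1)/2}, n, −n^{(σ−1)/2}) with n ∈ L a non-square and s/d odd; (3) B(p,m,s, 1, v², v^{σ−1}) with 0 ≠ v ∈ L and m/d odd; (4) B(p,m,s, 1, n, n^{σ−1}) with 0 ≠ n ∈ L and m/d odd. -/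

import Mathlib

/-- The first coordinate of the product `X(p,m,s,v,l,n,N)`; `B(p,m,s,l,n,N)` is the
case `v = 1`. -/
def Xh {L : Type*} [Field L] (σ : ℕ) (l n N v a b c d : L) : L :=
  (a * c ^ σ - n * N * b * d ^ σ) + l * (a ^ σ * c - n * N * b ^ σ * d)
    + n * v * ((N * a * d ^ σ - b * c ^ σ) + l * (a ^ σ * d - N * b ^ σ * c))

/-- The product `X(p,m,s,v,l,n,N)` on `L × L`. -/
def Xmul {L : Type*} [Field L] (σ : ℕ) (l n N v : L) (x y : L × L) : L × L :=
  (Xh σ l n N v x.1 x.2 y.1 y.2, x.1 * y.2 + x.2 * y.1)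

/-- The product has no zero divisors. -/
def NoZeroDivMul {α : Type*} [Zero α] (mul : α → α → α) : Prop :=
  ∀ x y : α, mul x y = 0 → x = 0 ∨ y = 0

/-- `star` is isotopic to a commutative presemifield. -/
def IsotopicToCommutative {α : Type*} [AddCommGroup α] (star : α → α → α) : Prop :=
  ∃ (cdot : α → α → α) (A B C : α ≃+ α),
    (∀ x y z : α, cdot (x + y) z = cdot x z + cdot y z) ∧
    (∀ x y z : α, cdot x (y + z) = cdot x y + cdot x z) ∧
    (∀ x y : α, cdot x y = 0 → x = 0 ∨ y = 0) ∧
    (∀ x y : α, cdot x y = cdot y x) ∧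
    (∀ x y : α, star (A x) (B y) = C (cdot x y))

/-- The polynomial condition `x^(σ+1) + (1 - 1/N) x + (1/n - 1)/N` has no root in `L`. -/
def BpolyCond {L : Type*} [Field L] (σ : ℕ) (n N : L) : Prop :=
  ∀ x : L, x ^ (σ + 1) + (1 - 1 / N) * x + (1 / n - 1) / N ≠ 0

/-!
Write `(a, b) * (c, d) = (h, a d + b c)`. Since `y ↦ y ^ σ` is additive, the relations
`a d + b c = 0` and `a^σ d^σ + b^σ c^σ = 0` give `c^(σ+1) h = K(c, d) F(a, c)` and
`-d^(σ+1) h = K(c, d) F(b, d)`, where `K(c, d) = c^σ (c + n d) + n N d^σ (c + d)` and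
`F(y, z) = y z^σ + l y^σ z`. As `K(c, d) = n N c^(σ+1) P(-(c + d)/c)` for the polynomial `P`
of `BpolyCond`, `K` vanishes only at `0`, and `F(y, z) = 0` forces `y z = 0` unless `-l` is a
`(σ - 1)`-th power. With `x = p^gcd(s, m)`, `σ = x^a` and `|L| = x^b`, the identity
`(σ - 1) (1 + x + ⋯ + x^(b-1)) = (|L| - 1) (1 + x + ⋯ + x^(a-1))` shows that `-l` is no such
power once `(-l)^(1 + x + ⋯ + x^(b-1)) ≠ 1`; by Euler's criterion this power is a sign fixed by
the parities of `a` and `b`.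

`X ⋆ Y := X * B Y` is commutative for the antidiagonal map `B (c, d) = (-n u d, u c)` when
`N² n = n^σ` and `l u = N u^σ` (cases 1–3), and for the shear `B (c, d) = (c - 2 n d, d)` when
`l = 1` and `n N = n^σ` (case 4).
-/

open Finset

section PowMap

variable {L : Type*} [CommRing L] {σ : ℕ}

def powRingHom (σ : ℕ) (hσ : ∀ y z : L, (y + z) ^ σ = y ^ σ + z ^ σ) : L →+* L :=
  RingHom.mk' (powMonoidHom σ) hσ

@[simp]
lemma powRingHom_apply (hσ : ∀ y z : L, (y + z) ^ σ = y ^ σ + z ^ σ) (y : L) :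
    powRingHom σ hσ y = y ^ σ :=
  rfl

end PowMap

section Product

variable {L : Type*} [Field L] {σ : ℕ}

lemma Xmul_add_left (hσ : ∀ y z : L, (y + z) ^ σ = y ^ σ + z ^ σ) (l n N v : L) (x y z : L × L) :
    Xmul σ l n N v (x + y) z = Xmul σ l n N v x z + Xmul σ l n N v y z := by
  simp only [Xmul, Xh, Prod.fst_add, Prod.snd_add, hσ, Prod.mk_add_mk, Prod.mk.injEq]
  constructor <;> ring

lemma Xmul_add_right (hσ : ∀ y z : L, (y + z) ^ σ = y ^ σ + z ^ σ) (l n N v : L) (x y z : L × L) :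
    Xmul σ l n N v x (y + z) = Xmul σ l n N v x y + Xmul σ l n N v x z := by
  simp only [Xmul, Xh, Prod.fst_add, Prod.snd_add, hσ, Prod.mk_add_mk, Prod.mk.injEq]
  constructor <;> ring

lemma eq_zero_of_bpolyCond (hσ : ∀ y z : L, (y + z) ^ σ = y ^ σ + z ^ σ) {n N : L}
    (hn : n ≠ 0) (hN : N ≠ 0) (hbp : BpolyCond σ n N) {c d : L}
    (h : c ^ σ * (c + n * d) + n * N * d ^ σ * (c + d) = 0) : c = 0 ∧ d = 0 := by
  by_cases hc : c = 0
  · subst hc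
    have h0 : (0 : L) ^ σ = 0 := map_zero (powRingHom σ hσ)
    have hd : n * N * d ^ (σ + 1) = 0 := by rw [pow_succ]; linear_combination h - (n * d) * h0
    simpa [hn, hN] using hd
  · exfalso
    apply hbp (-(c + d) / c)
    have hx : (-(c + d) / c) ^ σ = -(c ^ σ + d ^ σ) / c ^ σ := by
      rw [div_pow, ← powRingHom_apply hσ, map_neg, map_add]; rfl
    rw [pow_succ, hx]
    field_simp
    linear_combination h

lemma eq_zero_or_eq_zero_of_mul_pow_add {l : L} (hl : ∀ e : L, e ^ σ = -l * e → e = 0) {y z : L}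
    (h : y * z ^ σ + l * y ^ σ * z = 0) : y = 0 ∨ z = 0 := by
  by_cases hy : y = 0
  · exact Or.inl hy
  right
  have := hl (z / y) (by rw [div_pow]; field_simp; linear_combination h)
  simpa [hy] using this

theorem noZeroDivMul_Xmul (hσ : ∀ y z : L, (y + z) ^ σ = y ^ σ + z ^ σ) {l n N : L}
    (hn : n ≠ 0) (hN : N ≠ 0) (hbp : BpolyCond σ n N) (hl : ∀ e : L, e ^ σ = -l * e → e = 0) :
    NoZeroDivMul (Xmul σ l n N 1) := by
  rintro ⟨a, b⟩ ⟨c, d⟩ h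
  simp only [Xmul, Xh, Prod.mk_eq_zero] at h ⊢
  obtain ⟨h₁, h₂⟩ := h
  have h₂σ : a ^ σ * d ^ σ + b ^ σ * c ^ σ = 0 := by
    simpa only [map_add, map_mul, map_zero, powRingHom_apply] using congrArg (powRingHom σ hσ) h₂
  by_cases hy : c = 0 ∧ d = 0
  · exact Or.inr hy
  have hK : c ^ σ * (c + n * d) + n * N * d ^ σ * (c + d) ≠ 0 :=
    fun hK => hy (eq_zero_of_bpolyCond hσ hn hN hbp hK)
  have hac : a * c ^ σ + l * a ^ σ * c = 0 := by
    refine (mul_eq_zero.1 ?_).resolve_left hK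
    linear_combination c * c ^ σ * h₁ + n * c ^ σ * (c ^ σ + N * d ^ σ) * h₂
      + l * n * N * c * (c + d) * h₂σ
  have hbd : b * d ^ σ + l * b ^ σ * d = 0 := by
    refine (mul_eq_zero.1 ?_).resolve_left hK
    linear_combination -(d * d ^ σ) * h₁ + (c ^ σ + n * N * d ^ σ) * d ^ σ * h₂
      + l * (c + n * d) * d * h₂σ
  left
  rcases eq_zero_or_eq_zero_of_mul_pow_add hl hac with ha | hc <;>
    rcases eq_zero_or_eq_zero_of_mul_pow_add hl hbd with hb | hd
  · exact ⟨ha, hb⟩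
  · have hc : c ≠ 0 := fun hc => hy ⟨hc, hd⟩
    exact ⟨ha, by simpa [ha, hc] using h₂⟩
  · have hd : d ≠ 0 := fun hd => hy ⟨hc, hd⟩
    exact ⟨by simpa [hb, hd] using h₂, hb⟩
  · exact absurd ⟨hc, hd⟩ hy

lemma Xmul_antidiag_comm (hσ : ∀ y z : L, (y + z) ^ σ = y ^ σ + z ^ σ) {l n N u : L}
    (hNn : N ^ 2 * n = n ^ σ) (hlu : l * u = N * u ^ σ) (x y : L × L) :
    Xmul σ l n N 1 x (-(n * u) * y.2, u * y.1) = Xmul σ l n N 1 y (-(n * u) * x.2, u * x.1) := by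
  have hr : ∀ w : L, (-(n * u) * w) ^ σ = -(n ^ σ * u ^ σ * w ^ σ) := fun w => by
    simp only [← powRingHom_apply hσ, map_neg, map_mul, neg_mul]
  obtain ⟨a, b⟩ := x
  obtain ⟨c, d⟩ := y
  simp only [Xmul, Xh, Prod.mk.injEq, hr, mul_pow]
  constructor
  · linear_combination (a * c ^ σ - a ^ σ * c) * (-n * hlu)
      + (a * d ^ σ - b ^ σ * c) * (u ^ σ * hNn + n * N * hlu)
      + (a ^ σ * d - b * c ^ σ) * (-n * hlu)
      + (b ^ σ * d - b * d ^ σ) * (n * u ^ σ * hNn + n ^ 2 * N * hlu)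
  · ring

lemma Xmul_shear_comm (hσ : ∀ y z : L, (y + z) ^ σ = y ^ σ + z ^ σ) {n N : L}
    (hnN : n * N = n ^ σ) (x y : L × L) :
    Xmul σ 1 n N 1 x (y.1 - 2 * n * y.2, y.2) = Xmul σ 1 n N 1 y (x.1 - 2 * n * x.2, x.2) := by
  have hsh : ∀ c d : L, (c - 2 * n * d) ^ σ = c ^ σ - 2 * (n * N) * d ^ σ := fun c d => by
    simp only [hnN, ← powRingHom_apply hσ, map_sub, map_mul, map_ofNat]
  obtain ⟨a, b⟩ := x
  obtain ⟨c, d⟩ := y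
  simp only [Xmul, Xh, Prod.mk.injEq, hsh]
  constructor <;> ring

end Product

theorem isotopicToCommutative_of_comm {α : Type*} [AddCommGroup α] {star : α → α → α}
    (B : α ≃+ α) (hleft : ∀ x y z, star (x + y) z = star x z + star y z)
    (hright : ∀ x y z, star x (y + z) = star x y + star x z) (hnzd : NoZeroDivMul star)
    (hcomm : ∀ x y, star x (B y) = star y (B x)) : IsotopicToCommutative star := by
  refine ⟨fun x y => star x (B y), .refl _, B, .refl _, fun x y z => hleft x y (B z),
    fun x y z => ?_, fun x y h => ?_, hcomm, fun x y => rfl⟩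
  · simp only [map_add, hright]
  · exact (hnzd x (B y) h).imp id fun h => by simpa using h

def antidiagEquiv {R : Type*} [DivisionRing R] (r u : R) (hr : r ≠ 0) (hu : u ≠ 0) :
    (R × R) ≃+ (R × R) where
  toFun y := (r * y.2, u * y.1)
  invFun y := (u⁻¹ * y.2, r⁻¹ * y.1)
  left_inv y := by simp [hr, hu]
  right_inv y := by simp [hr, hu]
  map_add' x y := by simp only [Prod.fst_add, Prod.snd_add, Prod.mk_add_mk, mul_add]

def shearEquiv {R : Type*} [Ring R] (κ : R) : (R × R) ≃+ (R × R) where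
  toFun y := (y.1 - κ * y.2, y.2)
  invFun y := (y.1 + κ * y.2, y.2)
  left_inv y := by simp
  right_inv y := by simp
  map_add' x y := by
    simp only [Prod.fst_add, Prod.snd_add, Prod.mk_add_mk, mul_add, sub_add_sub_comm]

section Presemifield

variable {L : Type*} [Field L] {σ : ℕ}

theorem isotopicToCommutative_Xmul_antidiag (hσ : ∀ y z : L, (y + z) ^ σ = y ^ σ + z ^ σ)
    {l n N u : L} (hn : n ≠ 0) (hu : u ≠ 0) (hNn : N ^ 2 * n = n ^ σ) (hlu : l * u = N * u ^ σ)
    (hnzd : NoZeroDivMul (Xmul σ l n N 1)) : IsotopicToCommutative (Xmul σ l n N 1) :=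
  isotopicToCommutative_of_comm (antidiagEquiv (-(n * u)) u (by simp [hn, hu]) hu)
    (Xmul_add_left hσ l n N 1) (Xmul_add_right hσ l n N 1) hnzd (Xmul_antidiag_comm hσ hNn hlu)

theorem isotopicToCommutative_Xmul_shear (hσ : ∀ y z : L, (y + z) ^ σ = y ^ σ + z ^ σ)
    {n N : L} (hnN : n * N = n ^ σ) (hnzd : NoZeroDivMul (Xmul σ 1 n N 1)) :
    IsotopicToCommutative (Xmul σ 1 n N 1) :=
  isotopicToCommutative_of_comm (shearEquiv (2 * n))
    (Xmul_add_left hσ 1 n N 1) (Xmul_add_right hσ 1 n N 1) hnzd (Xmul_shear_comm hσ hnN)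

theorem Xmul_inv_presemifield (hσ : ∀ y z : L, (y + z) ^ σ = y ^ σ + z ^ σ) {n N : L}
    (hn : n ≠ 0) (hNn : N ^ 2 * n = n ^ σ) (hbp : BpolyCond σ n N)
    (hl : ∀ e : L, e ^ σ = -N⁻¹ * e → e = 0) :
    NoZeroDivMul (Xmul σ N⁻¹ n N 1) ∧ IsotopicToCommutative (Xmul σ N⁻¹ n N 1) := by
  have hN : N ≠ 0 := by
    rintro rfl
    exact pow_ne_zero σ hn (by simpa using hNn.symm)
  have hnzd := noZeroDivMul_Xmul hσ hn hN hbp hl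
  refine ⟨hnzd, isotopicToCommutative_Xmul_antidiag hσ hn (inv_ne_zero hn) hNn ?_ hnzd⟩
  rw [inv_pow]
  field_simp
  linear_combination -hNn

end Presemifield

lemma pow_sub_one_mul_geom_sum_comm {x : ℕ} (hx : 1 ≤ x) (a b : ℕ) :
    (x ^ a - 1) * ∑ i ∈ range b, x ^ i = (x ^ b - 1) * ∑ i ∈ range a, x ^ i := by
  rw [← geom_sum_mul_of_one_le hx a, ← geom_sum_mul_of_one_le hx b]
  ring

lemma geom_sum_mod_two {x : ℕ} (hx : Odd x) (k : ℕ) :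
    (∑ i ∈ range k, x ^ i) % 2 = k % 2 := by
  induction k with
  | zero => rfl
  | succ k ih =>
    rw [sum_range_succ, Nat.add_mod, ih, Nat.odd_iff.1 hx.pow]
    omega

lemma neg_one_pow_geom_sum {R : Type*} [Ring R] {x : ℕ} (hx : Odd x) (k : ℕ) :
    (-1 : R) ^ ∑ i ∈ range k, x ^ i = (-1) ^ k := by
  rw [neg_one_pow_eq_pow_mod_two, geom_sum_mod_two hx, ← neg_one_pow_eq_pow_mod_two]

lemma sq_pow_half_mul {M : Type*} [Monoid M] {σ : ℕ} (hσ : Odd σ) (n : M) :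
    (n ^ ((σ - 1) / 2)) ^ 2 * n = n ^ σ := by
  rw [← pow_mul, ← pow_succ]
  have := Nat.odd_iff.1 hσ
  congr 1
  omega

section FiniteField

variable {L : Type*} [Field L] [Fintype L] {x a b : ℕ}

lemma ringChar_ne_two_of_odd_card (hq : Odd (Fintype.card L)) : ringChar L ≠ 2 := fun h => by
  simpa [FiniteField.even_card_iff_char_two.1 h] using Nat.odd_iff.1 hq

lemma eq_zero_of_pow_eq_mul (hx : 1 ≤ x) (hq : Fintype.card L = x ^ b) {c : L}
    (hc : c ^ ∑ i ∈ range b, x ^ i ≠ 1) {e : L} (he : e ^ x ^ a = c * e) : e = 0 := by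
  by_contra h0
  have hce : c = e ^ (x ^ a - 1) := by
    refine mul_right_cancel₀ h0 ?_
    rw [← he, ← pow_succ, Nat.sub_add_cancel (Nat.one_le_pow _ _ hx)]
  apply hc
  rw [hce, ← pow_mul, pow_sub_one_mul_geom_sum_comm hx, pow_mul, ← hq,
    FiniteField.pow_card_sub_one_eq_one e h0, one_pow]

lemma pow_card_div_two_of_not_isSquare (hq : Odd (Fintype.card L)) {n : L} (hn : ¬IsSquare n) :
    n ^ (Fintype.card L / 2) = -1 := by
  have hF := ringChar_ne_two_of_odd_card hq
  have hn0 : n ≠ 0 := by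
    rintro rfl
    exact hn .zero
  exact (FiniteField.pow_dichotomy hF hn0).resolve_left
    fun h => hn ((FiniteField.isSquare_iff hF hn0).2 h)

lemma pow_half_pow_geom_sum_of_not_isSquare (hx : Odd x) (hq : Fintype.card L = x ^ b)
    {n : L} (hn : ¬IsSquare n) (a : ℕ) :
    (n ^ ((x ^ a - 1) / 2)) ^ ∑ i ∈ range b, x ^ i = (-1) ^ ∑ i ∈ range a, x ^ i := by
  have hodd : ∀ k, (x ^ k) % 2 = 1 := fun k => Nat.odd_iff.1 hx.pow
  have hexp : (x ^ a - 1) / 2 * ∑ i ∈ range b, x ^ i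
      = Fintype.card L / 2 * ∑ i ∈ range a, x ^ i := by
    have h2 : ∀ k, 2 ∣ x ^ k - 1 := fun k => by have := hodd k; omega
    have hdiv : Fintype.card L / 2 = (x ^ b - 1) / 2 := by have := hodd b; omega
    rw [hdiv, Nat.div_mul_right_comm (h2 a), Nat.div_mul_right_comm (h2 b),
      pow_sub_one_mul_geom_sum_comm hx.pos]
  rw [← pow_mul, hexp, pow_mul, pow_card_div_two_of_not_isSquare (hq ▸ hx.pow) hn]

lemma neg_one_ne_one_of_card_eq_pow (hx : Odd x) (hq : Fintype.card L = x ^ b) : (-1 : L) ≠ 1 :=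
  Ring.neg_one_ne_one_of_char_ne_two (ringChar_ne_two_of_odd_card (hq ▸ hx.pow))

lemma eq_zero_of_pow_eq_neg (hx : Odd x) (hq : Fintype.card L = x ^ b) (hb : Odd b) {e : L}
    (he : e ^ x ^ a = -1 * e) : e = 0 :=
  eq_zero_of_pow_eq_mul hx.pos hq
    (by rw [neg_one_pow_geom_sum hx, hb.neg_one_pow]; exact neg_one_ne_one_of_card_eq_pow hx hq) he

theorem Xmul_nonsquare_presemifield (hx : Odd x) (hq : Fintype.card L = x ^ b) (hab : a.Coprime b)
    (hσ : ∀ y z : L, (y + z) ^ x ^ a = y ^ x ^ a + z ^ x ^ a) {n : L} (hn : ¬IsSquare n)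
    (hpar : Even b ∨ Even a) (hbp : BpolyCond (x ^ a) n (n ^ ((x ^ a - 1) / 2))) :
    NoZeroDivMul (Xmul (x ^ a) (n ^ ((x ^ a - 1) / 2))⁻¹ n (n ^ ((x ^ a - 1) / 2)) 1) ∧
      IsotopicToCommutative
        (Xmul (x ^ a) (n ^ ((x ^ a - 1) / 2))⁻¹ n (n ^ ((x ^ a - 1) / 2)) 1) := by
  refine Xmul_inv_presemifield hσ (by rintro rfl; exact hn .zero) (sq_pow_half_mul hx.pow n) hbp
    fun e => eq_zero_of_pow_eq_mul hx.pos hq ?_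
  rw [neg_pow, inv_pow, pow_half_pow_geom_sum_of_not_isSquare hx hq hn, neg_one_pow_geom_sum hx,
    neg_one_pow_geom_sum hx]
  have hboth : ¬(Even a ∧ Even b) := fun ⟨ha, hb⟩ =>
    Nat.not_coprime_of_dvd_of_dvd one_lt_two ha.two_dvd hb.two_dvd hab
  rcases hpar with hb | ha
  · have ha : Odd a := Nat.not_even_iff_odd.1 fun ha => hboth ⟨ha, hb⟩
    simpa [hb.neg_one_pow, ha.neg_one_pow] using neg_one_ne_one_of_card_eq_pow hx hq
  · have hb : Odd b := Nat.not_even_iff_odd.1 fun hb => hboth ⟨ha, hb⟩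
    simpa [hb.neg_one_pow, ha.neg_one_pow] using neg_one_ne_one_of_card_eq_pow hx hq

theorem Xmul_neg_nonsquare_presemifield (hx : Odd x) (hq : Fintype.card L = x ^ b)
    (hσ : ∀ y z : L, (y + z) ^ x ^ a = y ^ x ^ a + z ^ x ^ a) {n : L} (hn : ¬IsSquare n)
    (ha : Odd a) (hbp : BpolyCond (x ^ a) n (-(n ^ ((x ^ a - 1) / 2)))) :
    NoZeroDivMul (Xmul (x ^ a) (-(n ^ ((x ^ a - 1) / 2))⁻¹) n (-(n ^ ((x ^ a - 1) / 2))) 1) ∧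
      IsotopicToCommutative
        (Xmul (x ^ a) (-(n ^ ((x ^ a - 1) / 2))⁻¹) n (-(n ^ ((x ^ a - 1) / 2))) 1) := by
  rw [← inv_neg]
  refine Xmul_inv_presemifield hσ (by rintro rfl; exact hn .zero)
    (by rw [neg_sq, sq_pow_half_mul hx.pow n]) hbp fun e => eq_zero_of_pow_eq_mul hx.pos hq ?_
  rw [inv_neg, neg_neg, inv_pow, pow_half_pow_geom_sum_of_not_isSquare hx hq hn,
    neg_one_pow_geom_sum hx, ha.neg_one_pow, inv_neg_one]
  exact neg_one_ne_one_of_card_eq_pow hx hq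

theorem Xmul_sq_presemifield (hx : Odd x) (hq : Fintype.card L = x ^ b)
    (hσ : ∀ y z : L, (y + z) ^ x ^ a = y ^ x ^ a + z ^ x ^ a) {v : L} (hv : v ≠ 0)
    (hb : Odd b) (hbp : BpolyCond (x ^ a) (v ^ 2) (v ^ (x ^ a - 1))) :
    NoZeroDivMul (Xmul (x ^ a) 1 (v ^ 2) (v ^ (x ^ a - 1)) 1) ∧
      IsotopicToCommutative (Xmul (x ^ a) 1 (v ^ 2) (v ^ (x ^ a - 1)) 1) := by
  have hσ1 : v ^ (x ^ a - 1) * v = v ^ x ^ a := by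
    rw [← pow_succ, Nat.sub_add_cancel (Nat.one_le_pow _ _ hx.pos)]
  have hnzd := noZeroDivMul_Xmul hσ (pow_ne_zero 2 hv) (pow_ne_zero _ hv) hbp
    fun e => eq_zero_of_pow_eq_neg hx hq hb
  refine ⟨hnzd,
    isotopicToCommutative_Xmul_antidiag hσ (pow_ne_zero 2 hv) (inv_ne_zero hv) ?_ ?_ hnzd⟩
  · rw [pow_right_comm v 2, ← hσ1]; ring
  · rw [inv_pow, ← hσ1]; field_simp

theorem Xmul_pow_presemifield (hx : Odd x) (hq : Fintype.card L = x ^ b)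
    (hσ : ∀ y z : L, (y + z) ^ x ^ a = y ^ x ^ a + z ^ x ^ a) {n : L} (hn : n ≠ 0)
    (hb : Odd b) (hbp : BpolyCond (x ^ a) n (n ^ (x ^ a - 1))) :
    NoZeroDivMul (Xmul (x ^ a) 1 n (n ^ (x ^ a - 1)) 1) ∧
      IsotopicToCommutative (Xmul (x ^ a) 1 n (n ^ (x ^ a - 1)) 1) := by
  have hnzd := noZeroDivMul_Xmul hσ hn (pow_ne_zero _ hn) hbp
    fun e => eq_zero_of_pow_eq_neg hx hq hb
  refine ⟨hnzd, isotopicToCommutative_Xmul_shear hσ ?_ hnzd⟩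
  rw [← pow_succ', Nat.sub_add_cancel (Nat.one_le_pow _ _ hx.pos)]

end FiniteField

theorem B_family_commutative_cases_general
    (p m s : ℕ) (hp : p.Prime) (hodd : Odd p)
    (L : Type*) [Field L] [Fintype L] (hcard : Fintype.card L = p ^ m) :
    (∀ n : L, (¬ ∃ t : L, t ^ 2 = n) →
      (Even (m / Nat.gcd s m) ∨ Even (s / Nat.gcd s m)) →
      BpolyCond (p ^ s) n (n ^ ((p ^ s - 1) / 2)) →
      NoZeroDivMul (Xmul (p ^ s) ((n ^ ((p ^ s - 1) / 2))⁻¹) n (n ^ ((p ^ s - 1) / 2)) 1) ∧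
      IsotopicToCommutative
        (Xmul (p ^ s) ((n ^ ((p ^ s - 1) / 2))⁻¹) n (n ^ ((p ^ s - 1) / 2)) 1)) ∧
    (∀ n : L, (¬ ∃ t : L, t ^ 2 = n) →
      Odd (s / Nat.gcd s m) →
      BpolyCond (p ^ s) n (-(n ^ ((p ^ s - 1) / 2))) →
      NoZeroDivMul (Xmul (p ^ s) (-(n ^ ((p ^ s - 1) / 2))⁻¹) n (-(n ^ ((p ^ s - 1) / 2))) 1) ∧
      IsotopicToCommutative
        (Xmul (p ^ s) (-(n ^ ((p ^ s - 1) / 2))⁻¹) n (-(n ^ ((p ^ s - 1) / 2))) 1)) ∧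
    (∀ v : L, v ≠ 0 →
      Odd (m / Nat.gcd s m) →
      BpolyCond (p ^ s) (v ^ 2) (v ^ (p ^ s - 1)) →
      NoZeroDivMul (Xmul (p ^ s) 1 (v ^ 2) (v ^ (p ^ s - 1)) 1) ∧
      IsotopicToCommutative (Xmul (p ^ s) 1 (v ^ 2) (v ^ (p ^ s - 1)) 1)) ∧
    (∀ n : L, n ≠ 0 →
      Odd (m / Nat.gcd s m) →
      BpolyCond (p ^ s) n (n ^ (p ^ s - 1)) →
      NoZeroDivMul (Xmul (p ^ s) 1 n (n ^ (p ^ s - 1)) 1) ∧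
      IsotopicToCommutative (Xmul (p ^ s) 1 n (n ^ (p ^ s - 1)) 1)) := by
  have := Fact.mk hp
  have := charP_of_card_eq_prime_pow (R := L) hcard
  have hm : 0 < m := Nat.pos_of_ne_zero fun hm => by
    simpa [hm, hcard] using Fintype.one_lt_card (α := L)
  have hq : Fintype.card L = (p ^ s.gcd m) ^ (m / s.gcd m) := by
    rw [hcard, ← pow_mul, Nat.mul_div_cancel' (Nat.gcd_dvd_right s m)]
  have hσ : p ^ s = (p ^ s.gcd m) ^ (s / s.gcd m) := by
    rw [← pow_mul, Nat.mul_div_cancel' (Nat.gcd_dvd_left s m)]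
  have hadd : ∀ y z : L, (y + z) ^ p ^ s = y ^ p ^ s + z ^ p ^ s :=
    fun y z => add_pow_char_pow y z p s
  have hsq (n : L) (hn : ¬∃ t : L, t ^ 2 = n) : ¬IsSquare n :=
    fun ⟨t, ht⟩ => hn ⟨t, by rw [ht, sq]⟩
  have hx : Odd (p ^ s.gcd m) := hodd.pow
  rw [hσ] at hadd ⊢
  exact ⟨fun n hn hpar hbp => Xmul_nonsquare_presemifield hx hq
      (Nat.coprime_div_gcd_div_gcd (Nat.gcd_pos_of_pos_right s hm)) hadd (hsq n hn) hpar hbp,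
    fun n hn ha hbp => Xmul_neg_nonsquare_presemifield hx hq hadd (hsq n hn) ha hbp,
    fun v hv hb hbp => Xmul_sq_presemifield hx hq hadd hv hb hbp,
    fun n hn hb hbp => Xmul_pow_presemifield hx hq hadd hn hb hbp⟩

/-- Corollary 7.11. -/
theorem B_family_commutative_cases
    (p m s : ℕ) (hp : p.Prime) (hodd : Odd p) (hs : 0 < s) (hsm : s < m)
    (L : Type*) [Field L] [Fintype L] (hcard : Fintype.card L = p ^ m) :
    (∀ n : L, (¬ ∃ t : L, t ^ 2 = n) →
      (Even (m / Nat.gcd s m) ∨ Even (s / Nat.gcd s m)) →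
      BpolyCond (p ^ s) n (n ^ ((p ^ s - 1) / 2)) →
      NoZeroDivMul (Xmul (p ^ s) ((n ^ ((p ^ s - 1) / 2))⁻¹) n (n ^ ((p ^ s - 1) / 2)) 1) ∧
      IsotopicToCommutative
        (Xmul (p ^ s) ((n ^ ((p ^ s - 1) / 2))⁻¹) n (n ^ ((p ^ s - 1) / 2)) 1)) ∧
    (∀ n : L, (¬ ∃ t : L, t ^ 2 = n) →
      Odd (s / Nat.gcd s m) →
      BpolyCond (p ^ s) n (-(n ^ ((p ^ s - 1) / 2))) →
      NoZeroDivMul (Xmul (p ^ s) (-(n ^ ((p ^ s - 1) / 2))⁻¹) n (-(n ^ ((p ^ s - 1) / 2))) 1) ∧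
      IsotopicToCommutative
        (Xmul (p ^ s) (-(n ^ ((p ^ s - 1) / 2))⁻¹) n (-(n ^ ((p ^ s - 1) / 2))) 1)) ∧
    (∀ v : L, v ≠ 0 →
      Odd (m / Nat.gcd s m) →
      BpolyCond (p ^ s) (v ^ 2) (v ^ (p ^ s - 1)) →
      NoZeroDivMul (Xmul (p ^ s) 1 (v ^ 2) (v ^ (p ^ s - 1)) 1) ∧
      IsotopicToCommutative (Xmul (p ^ s) 1 (v ^ 2) (v ^ (p ^ s - 1)) 1)) ∧
    (∀ n : L, n ≠ 0 →
      Odd (m / Nat.gcd s m) →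
      BpolyCond (p ^ s) n (n ^ (p ^ s - 1)) →
      NoZeroDivMul (Xmul (p ^ s) 1 n (n ^ (p ^ s - 1)) 1) ∧
      IsotopicToCommutative (Xmul (p ^ s) 1 n (n ^ (p ^ s - 1)) 1)) :=
  B_family_commutative_cases_general p m s hp hodd L hcard
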